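/- arXiv:2401.05974 — 4 statements merged into one kernel-verified Lean document; each statement's English description precedes it below -/
import Mathlib

section
/- Suppose the commutative square with sides g : A → K, f : A → B, f' : K → L, g' : B → L is a pushout in K (a pushout in K₀ preserved by every representable K(−,K) : K₀ᵒᵖ → V₀). Then for every morphism k : C → D in K₀, the square in V₀ with sides K(g',C) : K(L,C) → K(B,C), e_{f',k} : K(L,C) → Sq(f',k), e_{f,k} : K(B,C) → Sq(f,k) and the induced morphism Sq((g,g'),k) : Sq(f',k) → Sq(f,k) is a pullback. -/
/-!
STATEMENT 8: If the commutative square with sides `g : A ⟶ A'`, `f : A ⟶ B`,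
`f' : A' ⟶ B'`, `g' : B ⟶ B'` is a pushout in the `𝒱`-category `K` (i.e. a
pushout in `K₀` preserved by every representable `K(-,T) : K₀ᵒᵖ ⥤ 𝒱₀`), then
for every `k : C ⟶ D` the square with sides `K(g',C)`, `e_{f',k}`, `e_{f,k}`
and `Sq((g,g'),k)` is a pullback in `𝒱₀`.
-/

open CategoryTheory Category Limits MonoidalCategory

universe v₂ v₁ u₂ u₁

variable (𝒱 : Type u₁) [Category.{v₁} 𝒱] [MonoidalCategory 𝒱] [HasPullbacks 𝒱]
variable {K : Type u₂} [Category.{v₂} K] [EnrichedOrdinaryCategory 𝒱 K]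

/-- The object of squares connecting `f` to `k`. -/
noncomputable def Sq {A B C D : K} (f : A ⟶ B) (k : C ⟶ D) : 𝒱 :=
  pullback (eHomWhiskerLeft 𝒱 A k) (eHomWhiskerRight 𝒱 f D)

/-- First projection `Sq(f,k) ⟶ K(A,C)`. -/
noncomputable def Sq.p₁ {A B C D : K} (f : A ⟶ B) (k : C ⟶ D) :
    Sq 𝒱 f k ⟶ (A ⟶[𝒱] C) :=
  pullback.fst _ _

/-- Second projection `Sq(f,k) ⟶ K(B,D)`. -/
noncomputable def Sq.p₂ {A B C D : K} (f : A ⟶ B) (k : C ⟶ D) :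
    Sq 𝒱 f k ⟶ (B ⟶[𝒱] D) :=
  pullback.snd _ _

/-- The comparison morphism `e_{f,k} : K(B,C) ⟶ Sq(f,k)`. -/
noncomputable def eMor {A B C D : K} (f : A ⟶ B) (k : C ⟶ D) :
    (B ⟶[𝒱] C) ⟶ Sq 𝒱 f k :=
  pullback.lift (eHomWhiskerRight 𝒱 f C) (eHomWhiskerLeft 𝒱 B k)
    (eHom_whisker_exchange 𝒱 f k).symm

/-- Functoriality of `Sq(-,k)`: a commutative square `(g,g') : f ⟶ f'`
induces `Sq((g,g'),k) : Sq(f',k) ⟶ Sq(f,k)`. -/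
noncomputable def SqMap {A B A' B' C D : K} (f : A ⟶ B) (f' : A' ⟶ B')
    (g : A ⟶ A') (g' : B ⟶ B') (hsq : g ≫ f' = f ≫ g') (k : C ⟶ D) :
    Sq 𝒱 f' k ⟶ Sq 𝒱 f k :=
  pullback.lift (Sq.p₁ 𝒱 f' k ≫ eHomWhiskerRight 𝒱 g C)
    (Sq.p₂ 𝒱 f' k ≫ eHomWhiskerRight 𝒱 g' D)
    (by
      rw [assoc, ← eHom_whisker_exchange, ← assoc,
        show Sq.p₁ 𝒱 f' k ≫ eHomWhiskerLeft 𝒱 A' k = Sq.p₂ 𝒱 f' k ≫ eHomWhiskerRight 𝒱 f' D from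
          pullback.condition, assoc,
        ← eHomWhiskerRight_comp, hsq, eHomWhiskerRight_comp, assoc])

theorem isPullback_e_of_enriched_pushout
    {A B A' B' C D : K} (f : A ⟶ B) (g : A ⟶ A') (f' : A' ⟶ B') (g' : B ⟶ B')
    (hpo : IsPushout g f f' g')
    (hpres : ∀ T : K,
      IsPullback (eHomWhiskerRight 𝒱 f' T) (eHomWhiskerRight 𝒱 g' T)
        (eHomWhiskerRight 𝒱 g T) (eHomWhiskerRight 𝒱 f T))
    (k : C ⟶ D) :
    IsPullback (eHomWhiskerRight 𝒱 g' C) (eMor 𝒱 f' k) (eMor 𝒱 f k)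
      (SqMap 𝒱 f f' g g' hpo.w k) := by
  -- Step 1: the square (SqMap, p₁', p₁, K(g,C)) is a pullback.
  have hB : IsPullback (SqMap 𝒱 f f' g g' hpo.w k) (Sq.p₁ 𝒱 f' k) (Sq.p₁ 𝒱 f k)
      (eHomWhiskerRight 𝒱 g C) := by
    have hbig : IsPullback (Sq.p₂ 𝒱 f' k ≫ eHomWhiskerRight 𝒱 g' D) (Sq.p₁ 𝒱 f' k)
        (eHomWhiskerRight 𝒱 f D)
        (eHomWhiskerRight 𝒱 g C ≫ eHomWhiskerLeft 𝒱 A k) := by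
      rw [← eHom_whisker_exchange]
      exact ((IsPullback.of_hasPullback (eHomWhiskerLeft 𝒱 A' k)
        (eHomWhiskerRight 𝒱 f' D)).flip).paste_horiz (hpres D).flip
    have hcomm : SqMap 𝒱 f f' g g' hpo.w k ≫ Sq.p₂ 𝒱 f k
        = Sq.p₂ 𝒱 f' k ≫ eHomWhiskerRight 𝒱 g' D := pullback.lift_snd _ _ _
    rw [← hcomm] at hbig
    exact IsPullback.of_right hbig (pullback.lift_fst _ _ _)
      ((IsPullback.of_hasPullback (eHomWhiskerLeft 𝒱 A k) (eHomWhiskerRight 𝒱 f D)).flip)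
  -- Step 2: commutativity of the square to be proven a pullback.
  have hcomm2 : eHomWhiskerRight 𝒱 g' C ≫ eMor 𝒱 f k
      = eMor 𝒱 f' k ≫ SqMap 𝒱 f f' g g' hpo.w k := by
    apply pullback.hom_ext
    · simp only [eMor, SqMap, Sq, Sq.p₁, Category.assoc, pullback.lift_fst, pullback.lift_fst_assoc,
        ← eHomWhiskerRight_comp, hpo.w]
    · simp only [eMor, SqMap, Sq, Sq.p₂, Category.assoc, pullback.lift_snd, pullback.lift_snd_assoc,
        eHom_whisker_exchange]
  -- Step 3: the pasted square is a pullback (this is `hpres C`, flipped).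
  have hbig2 : IsPullback (eHomWhiskerRight 𝒱 g' C) (eMor 𝒱 f' k ≫ Sq.p₁ 𝒱 f' k)
      (eMor 𝒱 f k ≫ Sq.p₁ 𝒱 f k) (eHomWhiskerRight 𝒱 g C) := by
    have h1 : eMor 𝒱 f' k ≫ Sq.p₁ 𝒱 f' k = eHomWhiskerRight 𝒱 f' C := pullback.lift_fst _ _ _
    have h2 : eMor 𝒱 f k ≫ Sq.p₁ 𝒱 f k = eHomWhiskerRight 𝒱 f C := pullback.lift_fst _ _ _
    rw [h1, h2]
    exact (hpres C).flip
  exact IsPullback.of_bot hbig2 hcomm2 hB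
end

section
/- Let F = (L,R) be a weak prefactorization system on V₀ and I a class of morphisms in K₀. Then the class ᶠ□I is stable under transfinite compositions in K: if α > 0 is an ordinal and A₋ : α → K₀ is a chain whose successor maps f_{β,β+1} all lie in ᶠ□I, whose limit stages are enriched colimits (preserved by every representable K(−,K) : K₀ᵒᵖ → V₀), then the transfinite composite f_{0,α} : A₀ → colim_{β<α} A_β (the colimit again being an enriched colimit) lies in ᶠ□I. -/
/-!
STATEMENT 9: Let `𝓕 = (L,R)` be a weak prefactorization system on `𝒱₀` and
`I` a class of morphisms in `K₀`.  Then `ᶠ□I` is stable under transfinite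
compositions in the `𝒱`-category `K`: given a chain `D`, indexed by a
well-ordered set, whose successor maps lie in `ᶠ□I`, whose limit stages are
enriched colimits (i.e. colimits preserved by every representable
`K(-,T) : K₀ᵒᵖ ⥤ 𝒱₀`), and an enriched colimit cocone `c` on `D`, the
transfinite composite `c.ι.app ⊥ : D(⊥) ⟶ colim D` lies in `ᶠ□I`.
-/

open CategoryTheory Category Limits MonoidalCategory

universe v₂ v₁ u₂ u₁

variable (𝒱 : Type u₁) [Category.{v₁} 𝒱] [MonoidalCategory 𝒱] [HasPullbacks 𝒱]
variable {K : Type u₂} [Category.{v₂} K] [EnrichedOrdinaryCategory 𝒱 K]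

/-- The class of morphisms having the right lifting property with respect to
every member of `S`. -/
def rlpOf {C : Type*} [Category C] (S : MorphismProperty C) : MorphismProperty C :=
  fun _ _ g => ∀ ⦃X Y : C⦄ (f : X ⟶ Y), S f → HasLiftingProperty f g

/-- The class of morphisms having the left lifting property with respect to
every member of `S`. -/
def llpOf {C : Type*} [Category C] (S : MorphismProperty C) : MorphismProperty C :=
  fun _ _ f => ∀ ⦃X Y : C⦄ (g : X ⟶ Y), S g → HasLiftingProperty f g

/-- Given a class `R` in `𝒱₀` (the right class of a weak prefactorization
system `𝓕`) and a class `I` of morphisms of `K₀`, this is the class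
`ᶠ□I` of morphisms `f` with `e_{f,k} ∈ R` for all `k ∈ I`, i.e. having the
left `𝓕`-lifting property with respect to every member of `I`. -/
def fLlp (R : MorphismProperty 𝒱) (I : MorphismProperty K) :
    MorphismProperty K :=
  fun _ _ f => ∀ ⦃C D : K⦄ (k : C ⟶ D), I k → R (eMor 𝒱 f k)

universe w

/-- The inclusion of the initial segment `{i | i < j}` into `J`. -/
def iioFunctor {J : Type w} [LinearOrder J] (j : J) : Set.Iio j ⥤ J :=
  Monotone.functor (f := fun x => (x : J)) (fun _ _ h => h)

/-- The canonical cocone, with vertex `D.obj j`, on the restriction of a chain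
`D : J ⥤ K` to the initial segment `{i | i < j}`. -/
@[simps]
def coconeAt {J : Type w} [LinearOrder J] (D : J ⥤ K) (j : J) :
    Cocone (iioFunctor j ⋙ D) where
  pt := D.obj j
  ι :=
    { app := fun x => D.map (homOfLE x.2.le)
      naturality := fun x y h => by
        dsimp [iioFunctor, Monotone.functor]
        rw [← D.map_comp, comp_id]
        rfl }

theorem fLlp_stable_under_transfinite_composition
    (L R : MorphismProperty 𝒱) (h₁ : rlpOf L = R) (h₂ : llpOf R = L)
    (I : MorphismProperty K)
    (J : Type w) [LinearOrder J] [OrderBot J] [SuccOrder J] [WellFoundedLT J]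
    (D : J ⥤ K)
    (hsucc : ∀ j : J, ¬ IsMax j →
      fLlp 𝒱 R I (D.map (homOfLE (Order.le_succ j))))
    (hlim : ∀ j : J, Order.IsSuccLimit j →
      Nonempty (IsColimit (coconeAt D j)) ∧
      ∀ T : K, Nonempty (IsLimit
        (((eHomFunctor 𝒱 K).flip.obj T).mapCone (coconeAt D j).op)))
    (c : Cocone D) (hc : IsColimit c)
    (hcpres : ∀ T : K, Nonempty (IsLimit
      (((eHomFunctor 𝒱 K).flip.obj T).mapCone c.op))) :
    fLlp 𝒱 R I (c.ι.app ⊥) := by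
  intro C₀ D₀ k hk
  subst h₁
  intro X Y f hf
  constructor
  intro u v sq
  dsimp only [Functor.const_obj_obj] at u v sq ⊢
  -- Interface to the pullback `Sq`
  have e₁ : ∀ {A B : K} (g : A ⟶ B), eMor 𝒱 g k ≫ Sq.p₁ 𝒱 g k = eHomWhiskerRight 𝒱 g C₀ :=
    fun g => pullback.lift_fst _ _ _
  have e₂ : ∀ {A B : K} (g : A ⟶ B), eMor 𝒱 g k ≫ Sq.p₂ 𝒱 g k = eHomWhiskerLeft 𝒱 B k :=
    fun g => pullback.lift_snd _ _ _
  have pb : ∀ {A B : K} (g : A ⟶ B),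
      Sq.p₁ 𝒱 g k ≫ eHomWhiskerLeft 𝒱 A k = Sq.p₂ 𝒱 g k ≫ eHomWhiskerRight 𝒱 g D₀ :=
    fun g => pullback.condition
  have sq_hom_ext : ∀ {A B : K} (g : A ⟶ B) {W' : 𝒱} (a b : W' ⟶ Sq 𝒱 g k),
      a ≫ Sq.p₁ 𝒱 g k = b ≫ Sq.p₁ 𝒱 g k → a ≫ Sq.p₂ 𝒱 g k = b ≫ Sq.p₂ 𝒱 g k → a = b := by
    intro A B g W' a b h1 h2
    exact pullback.hom_ext h1 h2
  have sq_lift : ∀ {A B : K} (g : A ⟶ B) {W' : 𝒱} (a : W' ⟶ (A ⟶[𝒱] C₀))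
      (b : W' ⟶ (B ⟶[𝒱] D₀)) (hw : a ≫ eHomWhiskerLeft 𝒱 A k = b ≫ eHomWhiskerRight 𝒱 g D₀),
      { t : W' ⟶ Sq 𝒱 g k // t ≫ Sq.p₁ 𝒱 g k = a ∧ t ≫ Sq.p₂ 𝒱 g k = b } := by
    intro A B g W' a b hw
    exact ⟨pullback.lift a b hw, pullback.lift_fst _ _ _, pullback.lift_snd _ _ _⟩
  -- whiskering computations
  have hWRι : ∀ {i j : J} (h : i ≤ j) (T : K),
      eHomWhiskerRight 𝒱 (c.ι.app j) T ≫ eHomWhiskerRight 𝒱 (D.map (homOfLE h)) T =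
        eHomWhiskerRight 𝒱 (c.ι.app i) T := by
    intro i j h T
    rw [← eHomWhiskerRight_comp, Cocone.w]
  have hWRD : ∀ {i j l : J} (hij : i ≤ j) (hjl : j ≤ l) (T : K),
      eHomWhiskerRight 𝒱 (D.map (homOfLE hjl)) T ≫ eHomWhiskerRight 𝒱 (D.map (homOfLE hij)) T =
        eHomWhiskerRight 𝒱 (D.map (homOfLE (hij.trans hjl))) T := by
    intro i j l hij hjl T
    rw [← eHomWhiskerRight_comp, ← D.map_comp, homOfLE_comp]
  have hexch : ∀ {A B : K} (g : A ⟶ B),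
      eHomWhiskerRight 𝒱 g C₀ ≫ eHomWhiskerLeft 𝒱 A k =
        eHomWhiskerLeft 𝒱 B k ≫ eHomWhiskerRight 𝒱 g D₀ :=
    fun g => (eHom_whisker_exchange 𝒱 g k).symm
  have hWRid : ∀ {j : J} (h : j ≤ j) (T : K),
      eHomWhiskerRight 𝒱 (D.map (homOfLE h)) T = 𝟙 _ := by
    intro j h T
    have : homOfLE h = 𝟙 j := rfl
    rw [this, D.map_id, eHomWhiskerRight_id]
  -- consequences of the commutative square `sq`
  have squ₁ : f ≫ (v ≫ Sq.p₁ 𝒱 (c.ι.app ⊥) k) = u ≫ eHomWhiskerRight 𝒱 (c.ι.app ⊥) C₀ := by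
    rw [← e₁ (B := c.pt) (c.ι.app ⊥), ← assoc, ← sq.w, assoc]
  have squ₂ : u ≫ eHomWhiskerLeft 𝒱 c.pt k = f ≫ v ≫ Sq.p₂ 𝒱 (c.ι.app ⊥) k := by
    rw [← e₂ (B := c.pt) (c.ι.app ⊥), ← assoc, sq.w, assoc]
  -- the poset of partial solutions
  set base : Y ⟶ ((D.obj ⊥) ⟶[𝒱] C₀) := v ≫ Sq.p₁ 𝒱 (c.ι.app ⊥) k with hbase
  set Good : Set ((j : J) × (Y ⟶ ((D.obj j) ⟶[𝒱] C₀))) → Prop := fun F =>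
    (∀ p ∈ F, ∀ i, i ≤ p.1 → ∃ m', (⟨i, m'⟩ : (j : J) × (Y ⟶ ((D.obj j) ⟶[𝒱] C₀))) ∈ F) ∧
    (∀ p ∈ F, f ≫ p.2 = u ≫ eHomWhiskerRight 𝒱 (c.ι.app p.1) C₀) ∧
    (∀ p ∈ F, p.2 ≫ eHomWhiskerLeft 𝒱 (D.obj p.1) k =
      v ≫ Sq.p₂ 𝒱 (c.ι.app ⊥) k ≫ eHomWhiskerRight 𝒱 (c.ι.app p.1) D₀) ∧
    (∀ p ∈ F, ∀ q ∈ F, ∀ h : p.1 ≤ q.1,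
      q.2 ≫ eHomWhiskerRight 𝒱 (D.map (homOfLE h)) C₀ = p.2) with hGood
  -- the seed is good
  have seed_good : Good {⟨⊥, base⟩} := by
    refine ⟨?_, ?_, ?_, ?_⟩
    · rintro p rfl i hi
      obtain rfl := le_bot_iff.mp hi
      exact ⟨base, rfl⟩
    · rintro p rfl
      exact squ₁
    · rintro p rfl
      rw [hbase, assoc, pb (B := c.pt) (c.ι.app ⊥)]
    · rintro p rfl q rfl h
      rw [hWRid h, comp_id]
  -- chains of good families have good unions
  have chain_good : ∀ ch ⊆ {F | Good F}, IsChain (· ⊆ ·) ch → ch.Nonempty →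
      ∃ ub ∈ {F | Good F}, ∀ s ∈ ch, s ⊆ ub := by
    intro ch hch hchain _
    refine ⟨⋃₀ ch, ⟨?_, ?_, ?_, ?_⟩, fun s hs => Set.subset_sUnion_of_mem hs⟩
    · rintro p ⟨F, hF, hp⟩ i hi
      obtain ⟨m', hm'⟩ := (hch hF).1 p hp i hi
      exact ⟨m', Set.mem_sUnion_of_mem hm' hF⟩
    · rintro p ⟨F, hF, hp⟩
      exact (hch hF).2.1 p hp
    · rintro p ⟨F, hF, hp⟩
      exact (hch hF).2.2.1 p hp
    · rintro p ⟨F, hF, hp⟩ q ⟨F', hF', hq⟩ h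
      rcases hchain.total hF hF' with hss | hss
      · exact (hch hF').2.2.2 p (hss hp) q hq h
      · exact (hch hF).2.2.2 p hp q (hss hq) h
  obtain ⟨F, hseedF, hFGood, hFmax⟩ :=
    zorn_subset_nonempty {F | Good F} chain_good _ seed_good
  have hbotF : (⟨⊥, base⟩ : (j : J) × (Y ⟶ ((D.obj j) ⟶[𝒱] C₀))) ∈ F :=
    hseedF (Set.mem_singleton _)
  -- functionality
  have hfunc : ∀ {j : J} {m m' : Y ⟶ ((D.obj j) ⟶[𝒱] C₀)},
      (⟨j, m⟩ : (j : J) × (Y ⟶ ((D.obj j) ⟶[𝒱] C₀))) ∈ F → (⟨j, m'⟩ : (j : J) × (Y ⟶ ((D.obj j) ⟶[𝒱] C₀))) ∈ F → m = m' := by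
    intro j m m' hm hm'
    have := hFGood.2.2.2 ⟨j, m⟩ hm ⟨j, m'⟩ hm' (le_refl j)
    rw [hWRid (le_refl j), comp_id] at this
    exact this.symm
  -- the domain of `F` is everything
  have hall : ∀ jj : J, ∃ m, (⟨jj, m⟩ : (j : J) × (Y ⟶ ((D.obj j) ⟶[𝒱] C₀))) ∈ F := by
    by_contra hnot
    push_neg at hnot
    obtain ⟨j₀, hj₀⟩ := hnot
    obtain ⟨j, hjS, hjmin⟩ := wellFounded_lt.has_min {j : J | ∀ m, (⟨j, m⟩ : (j : J) × (Y ⟶ ((D.obj j) ⟶[𝒱] C₀))) ∉ F}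
      ⟨j₀, hj₀⟩
    -- everything below `j` is in the domain
    have hS : ∀ i, i < j → ∃ m, (⟨i, m⟩ : (j : J) × (Y ⟶ ((D.obj j) ⟶[𝒱] C₀))) ∈ F := by
      intro i hi
      by_contra hi'
      push_neg at hi'
      exact absurd hi (hjmin i hi')
    -- everything in the domain is below `j`
    have hSlt : ∀ p ∈ F, p.1 < j := by
      intro p hp
      by_contra hle
      obtain ⟨m', hm'⟩ := hFGood.1 p hp j (le_of_not_gt hle)
      exact hjS m' hm'
    have hjbot : j ≠ ⊥ := by
      intro h
      subst h
      exact hjS base hbotF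
    -- a good extension of `F` at `j` yields a contradiction with maximality
    have hext : ∀ m : Y ⟶ ((D.obj j) ⟶[𝒱] C₀),
        Good (insert ⟨j, m⟩ F) → False := by
      intro m hgood
      have : insert (⟨j, m⟩ : (j : J) × (Y ⟶ ((D.obj j) ⟶[𝒱] C₀))) F ⊆ F :=
        hFmax hgood (Set.subset_insert _ _)
      exact hjS m (this (Set.mem_insert _ _))
    by_cases hj : Order.IsSuccLimit j
    · -- limit case: glue using the enriched limit
      obtain ⟨hL⟩ := (hlim j hj).2 C₀
      obtain ⟨hL'⟩ := (hlim j hj).2 D₀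
      choose l hl using fun i : Set.Iio j => hS i i.2
      -- a cone over the restricted diagram with apex `Y`
      let cn : Cone ((iioFunctor j ⋙ D).op ⋙ (eHomFunctor 𝒱 K).flip.obj C₀) :=
        { pt := Y
          π :=
            { app := fun i => l i.unop
              naturality := fun i i' hii => by
                have h : (i'.unop : J) ≤ (i.unop : J) := leOfHom hii.unop
                have := hFGood.2.2.2 ⟨(i'.unop : J), l i'.unop⟩ (hl i'.unop)
                  ⟨(i.unop : J), l i.unop⟩ (hl i.unop) h
                dsimp [iioFunctor, Monotone.functor]
                refine (id_comp _).trans ?_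
                exact this.symm } }
      set m : Y ⟶ ((D.obj j) ⟶[𝒱] C₀) := hL.lift cn with hm
      have hfac : ∀ i : Set.Iio j,
          m ≫ eHomWhiskerRight 𝒱 (D.map (homOfLE i.2.le)) C₀ = l i := by
        intro i
        exact hL.fac cn (Opposite.op i)
      -- each `l i` agrees with any element of `F` at index `i`
      have hlF : ∀ (i : J) (hi : i < j) (m' : Y ⟶ ((D.obj i) ⟶[𝒱] C₀)),
          (⟨i, m'⟩ : (j : J) × (Y ⟶ ((D.obj j) ⟶[𝒱] C₀))) ∈ F → l ⟨i, hi⟩ = m' :=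
        fun i hi m' hm' => hfunc (hl ⟨i, hi⟩) hm'
      refine hext m ⟨?_, ?_, ?_, ?_⟩
      · rintro p (rfl | hp) i hi
        · rcases eq_or_lt_of_le hi with rfl | hlt
          · exact ⟨m, Set.mem_insert _ _⟩
          · obtain ⟨m', hm'⟩ := hS i hlt
            exact ⟨m', Set.mem_insert_of_mem _ hm'⟩
        · obtain ⟨m', hm'⟩ := hFGood.1 p hp i hi
          exact ⟨m', Set.mem_insert_of_mem _ hm'⟩
      · rintro p (rfl | hp)
        · -- condition (A) at the limit stage, via `hom_ext`
          dsimp only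
          apply hL.hom_ext
          intro i
          have hπ : (((eHomFunctor 𝒱 K).flip.obj C₀).mapCone (coconeAt D j).op).π.app i =
              eHomWhiskerRight 𝒱 (D.map (homOfLE i.unop.2.le)) C₀ := rfl
          rw [hπ]
          change (f ≫ m) ≫ eHomWhiskerRight 𝒱 (D.map (homOfLE i.unop.2.le)) C₀ =
            (u ≫ eHomWhiskerRight 𝒱 (c.ι.app j) C₀) ≫ eHomWhiskerRight 𝒱 (D.map (homOfLE i.unop.2.le)) C₀
          rw [assoc, hfac i.unop, assoc, hWRι i.unop.2.le C₀]
          exact hFGood.2.1 _ (hl i.unop)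
        · exact hFGood.2.1 p hp
      · rintro p (rfl | hp)
        · -- condition (B) at the limit stage, via `hom_ext` in `D₀`
          dsimp only
          apply hL'.hom_ext
          intro i
          have hπ : (((eHomFunctor 𝒱 K).flip.obj D₀).mapCone (coconeAt D j).op).π.app i =
              eHomWhiskerRight 𝒱 (D.map (homOfLE i.unop.2.le)) D₀ := rfl
          rw [hπ]
          change (m ≫ eHomWhiskerLeft 𝒱 (D.obj j) k) ≫ eHomWhiskerRight 𝒱 (D.map (homOfLE i.unop.2.le)) D₀ =
            (v ≫ Sq.p₂ 𝒱 (c.ι.app ⊥) k ≫ eHomWhiskerRight 𝒱 (c.ι.app j) D₀) ≫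
              eHomWhiskerRight 𝒱 (D.map (homOfLE i.unop.2.le)) D₀
          simp only [assoc]
          rw [hWRι i.unop.2.le D₀, ← hexch (D.map (homOfLE i.unop.2.le)), ← assoc, hfac i.unop]
          exact hFGood.2.2.1 _ (hl i.unop)
        · exact hFGood.2.2.1 p hp
      · rintro p (rfl | hp) q (rfl | hq) h
        · rw [hWRid h, comp_id]
        · exact absurd (lt_of_lt_of_le (hSlt q hq) h) (lt_irrefl _)
        · -- p old, q new (= m)
          have hplt : p.1 < j := hSlt p hp
          have hh := hfac ⟨p.1, hplt⟩
          rw [hh]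
          exact hlF p.1 hplt p.2 hp
        · exact hFGood.2.2.2 p hp q hq h
    · -- successor case
      rcases Order.not_isSuccLimit_iff.mp hj with hmin | hpre
      · exact absurd (isMin_iff_eq_bot.mp hmin) hjbot
      · have : ∃ i, i ⋖ j := by
          by_contra hc
          push_neg at hc
          exact hpre fun b hb => hc b hb
        obtain ⟨i, hcov⟩ := this
        have hnmax : ¬ IsMax i := hcov.lt.not_isMax
        have hsi : Order.succ i = j := hcov.succ_eq
        subst hsi
        obtain ⟨mi, hmi⟩ := hS i hcov.lt
        -- lifting property at the successor stage
        have hlp : HasLiftingProperty f (eMor 𝒱 (D.map (homOfLE (Order.le_succ i))) k) :=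
          hsucc i hnmax k hk f hf
        have hw : mi ≫ eHomWhiskerLeft 𝒱 (D.obj i) k =
            (v ≫ Sq.p₂ 𝒱 (c.ι.app ⊥) k ≫
              eHomWhiskerRight 𝒱 (c.ι.app (Order.succ i)) D₀) ≫
              eHomWhiskerRight 𝒱 (D.map (homOfLE (Order.le_succ i))) D₀ := by
          simp only [assoc]
          rw [hWRι (Order.le_succ i) D₀]
          exact hFGood.2.2.1 ⟨i, mi⟩ hmi
        obtain ⟨v', hv'₁, hv'₂⟩ := sq_lift (D.map (homOfLE (Order.le_succ i))) mi
          (v ≫ Sq.p₂ 𝒱 (c.ι.app ⊥) k ≫ eHomWhiskerRight 𝒱 (c.ι.app (Order.succ i)) D₀) hw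
        have comm : (u ≫ eHomWhiskerRight 𝒱 (c.ι.app (Order.succ i)) C₀) ≫
            eMor 𝒱 (D.map (homOfLE (Order.le_succ i))) k = f ≫ v' := by
          apply sq_hom_ext (D.map (homOfLE (Order.le_succ i)))
          · simp only [assoc]
            rw [e₁ (D.map (homOfLE (Order.le_succ i))), hv'₁, hWRι (Order.le_succ i) C₀]
            exact (hFGood.2.1 ⟨i, mi⟩ hmi).symm
          · simp only [assoc]
            rw [e₂ (D.map (homOfLE (Order.le_succ i))), hv'₂,
              hexch (B := c.pt) (c.ι.app (Order.succ i)), ← assoc, squ₂]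
            simp only [assoc]
        have sq' : CommSq (u ≫ eHomWhiskerRight 𝒱 (c.ι.app (Order.succ i)) C₀) f
            (eMor 𝒱 (D.map (homOfLE (Order.le_succ i))) k) v' := ⟨comm⟩
        set m : Y ⟶ ((D.obj (Order.succ i)) ⟶[𝒱] C₀) := sq'.lift with hmdef
        have hfl : f ≫ m = u ≫ eHomWhiskerRight 𝒱 (c.ι.app (Order.succ i)) C₀ := sq'.fac_left
        have hfr : m ≫ eMor 𝒱 (D.map (homOfLE (Order.le_succ i))) k = v' := sq'.fac_right
        have hm₁ : m ≫ eHomWhiskerRight 𝒱 (D.map (homOfLE (Order.le_succ i))) C₀ = mi := by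
          rw [← e₁ (D.map (homOfLE (Order.le_succ i))), ← assoc, hfr, hv'₁]
        have hm₂ : m ≫ eHomWhiskerLeft 𝒱 (D.obj (Order.succ i)) k =
            v ≫ Sq.p₂ 𝒱 (c.ι.app ⊥) k ≫ eHomWhiskerRight 𝒱 (c.ι.app (Order.succ i)) D₀ := by
          rw [← e₂ (D.map (homOfLE (Order.le_succ i))), ← assoc, hfr, hv'₂]
        refine hext m ⟨?_, ?_, ?_, ?_⟩
        · rintro p (rfl | hp) i' hi'
          · rcases eq_or_lt_of_le hi' with rfl | hlt
            · exact ⟨m, Set.mem_insert _ _⟩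
            · obtain ⟨m', hm'⟩ := hS i' hlt
              exact ⟨m', Set.mem_insert_of_mem _ hm'⟩
          · obtain ⟨m', hm'⟩ := hFGood.1 p hp i' hi'
            exact ⟨m', Set.mem_insert_of_mem _ hm'⟩
        · rintro p (rfl | hp)
          · exact hfl
          · exact hFGood.2.1 p hp
        · rintro p (rfl | hp)
          · exact hm₂
          · exact hFGood.2.2.1 p hp
        · rintro p (rfl | hp) q (rfl | hq) h
          · rw [hWRid h, comp_id]
          · exact absurd (lt_of_lt_of_le (hSlt q hq) h) (lt_irrefl _)
          · -- p old, q = new m : factor through `i`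
            have hple : p.1 ≤ i := hcov.le_of_lt (hSlt p hp)
            rw [← hWRD hple (Order.le_succ i) C₀, ← assoc, hm₁]
            exact hFGood.2.2.2 p hp ⟨i, mi⟩ hmi hple
          · exact hFGood.2.2.2 p hp q hq h
  -- final gluing along the colimit cocone `c`
  choose l hl using hall
  obtain ⟨hLc⟩ := hcpres C₀
  obtain ⟨hLc'⟩ := hcpres D₀
  let cn : Cone (D.op ⋙ (eHomFunctor 𝒱 K).flip.obj C₀) :=
    { pt := Y
      π :=
        { app := fun j => l j.unop
          naturality := fun j j' hjj => by
            have h : (j'.unop : J) ≤ (j.unop : J) := leOfHom hjj.unop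
            have heq : hjj.unop = homOfLE h := rfl
            have := hFGood.2.2.2 ⟨j'.unop, l j'.unop⟩ (hl j'.unop)
              ⟨j.unop, l j.unop⟩ (hl j.unop) h
            dsimp
            refine (id_comp _).trans ?_
            exact this.symm } }
  set t : Y ⟶ (c.pt ⟶[𝒱] C₀) := hLc.lift cn with ht
  have hfact : ∀ j : J, t ≫ eHomWhiskerRight 𝒱 (c.ι.app j) C₀ = l j :=
    fun j => hLc.fac cn (Opposite.op j)
  refine ⟨⟨{ l := t, fac_left := ?_, fac_right := ?_ }⟩⟩
  · -- f ≫ t = u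
    apply hLc.hom_ext
    intro j
    have hπ : (((eHomFunctor 𝒱 K).flip.obj C₀).mapCone c.op).π.app j =
        eHomWhiskerRight 𝒱 (c.ι.app j.unop) C₀ := rfl
    rw [hπ]
    change (f ≫ t) ≫ eHomWhiskerRight 𝒱 (c.ι.app j.unop) C₀ = u ≫ eHomWhiskerRight 𝒱 (c.ι.app j.unop) C₀
    rw [assoc, hfact j.unop]
    exact hFGood.2.1 _ (hl j.unop)
  · -- t ≫ eMor = v
    apply sq_hom_ext (B := c.pt) (c.ι.app ⊥)
    · rw [assoc, e₁ (B := c.pt) (c.ι.app ⊥), hfact ⊥]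
      exact hfunc (hl ⊥) hbotF
    · rw [assoc, e₂ (B := c.pt) (c.ι.app ⊥)]
      apply hLc'.hom_ext
      intro j
      have hπ : (((eHomFunctor 𝒱 K).flip.obj D₀).mapCone c.op).π.app j =
          eHomWhiskerRight 𝒱 (c.ι.app j.unop) D₀ := rfl
      rw [hπ]
      change (t ≫ eHomWhiskerLeft 𝒱 c.pt k) ≫ eHomWhiskerRight 𝒱 (c.ι.app j.unop) D₀ =
        (v ≫ Sq.p₂ 𝒱 (c.ι.app ⊥) k) ≫ eHomWhiskerRight 𝒱 (c.ι.app j.unop) D₀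
      simp only [assoc]
      rw [← hexch (B := c.pt) (c.ι.app j.unop), ← assoc, hfact j.unop]
      exact hFGood.2.2.1 _ (hl j.unop)
end

section
/- Let λ be a regular cardinal and C a locally λ-presentable category with a set G of λ-presentable objects forming a strong generator. Let J = {u_V : 0 → V | V ∈ G} ∪ {∇_V : V + V → V | V ∈ G}, where 0 is the initial object and ∇_V = (id_V, id_V) is the codiagonal. Then J^□ is exactly the class of isomorphisms of C; equivalently, the weak factorization system (all morphisms, isomorphisms) on C is cofibrantly generated by J. -/
/-!
STATEMENT 15: Let `λ` be a regular cardinal and `C` a locally `λ`-presentable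
category with a set `G` of `λ`-presentable objects forming a strong generator.
Let `J = {u_V : 0 → V | V ∈ G} ∪ {∇_V : V + V → V | V ∈ G}`.  Then `J^□` is
exactly the class of isomorphisms of `C`; equivalently, the weak factorization
system (all morphisms, isomorphisms) on `C` is cofibrantly generated by `J`.

Here local `λ`-presentability is rendered by: `C` is cocomplete, each `V ∈ G`
is `λ`-presentable (its covariant hom-functor preserves colimits of
`λ`-directed posets), and `G` is a strong generator (a morphism is an
isomorphism iff every `V ∈ G` sees it as a bijection).
-/

open CategoryTheory Limits Opposite

universe w v u

/-- A poset is `μ`-directed if every subset of cardinality `< μ` has an upper bound. -/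
def IsCardinalDirectedPoset (μ : Cardinal.{w}) (P : Type w) [Preorder P] : Prop :=
  ∀ s : Set P, Cardinal.mk s < μ → ∃ b : P, ∀ x ∈ s, x ≤ b

/-- An object `V` is `μ`-presentable if `Hom(V, -)` preserves colimits of
`μ`-directed posets. -/
def IsCardinalPresentableObj {C : Type u} [Category.{v} C] (μ : Cardinal.{v})
    (V : C) : Prop :=
  ∀ (P : Type v) (_ : Preorder P), IsCardinalDirectedPoset μ P →
    ∀ (D : P ⥤ C) (c : Cocone D), Nonempty (IsColimit c) →
      Nonempty (IsColimit ((coyoneda.obj (op V)).mapCocone c))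

theorem rlp_of_generator_maps_iff_isIso
    {C : Type u} [Category.{v} C] [HasColimits C] [HasInitial C]
    [HasBinaryCoproducts C]
    (lam : Cardinal.{v}) (hlam : lam.IsRegular) (G : Set C)
    (hpres : ∀ V ∈ G, IsCardinalPresentableObj lam V)
    (hgen : ∀ {X Y : C} (v : X ⟶ Y),
      IsIso v ↔ ∀ V ∈ G, Function.Bijective (fun g : V ⟶ X => g ≫ v))
    {X Y : C} (v : X ⟶ Y) :
    ((∀ V ∈ G, HasLiftingProperty (initial.to V) v) ∧
     (∀ V ∈ G, HasLiftingProperty (coprod.desc (𝟙 V) (𝟙 V)) v)) ↔ IsIso v := by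
  constructor
  · rintro ⟨h0, h1⟩
    rw [hgen]
    intro V hV
    haveI := h0 V hV
    haveI := h1 V hV
    constructor
    · intro g₁ g₂ hg
      simp only at hg
      have sq : CommSq (coprod.desc g₁ g₂) (coprod.desc (𝟙 V) (𝟙 V)) v (g₁ ≫ v) := by
        constructor
        apply coprod.hom_ext <;> simp [hg]
      obtain ⟨⟨l⟩⟩ := (h1 V hV).sq_hasLift sq
      have h₁ : g₁ = l.l := by
        have := congrArg (fun t => coprod.inl ≫ t) l.fac_left
        simp only [coprod.inl_desc_assoc, coprod.inl_desc, Category.id_comp] at this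
        exact this.symm
      have h₂ : g₂ = l.l := by
        have := congrArg (fun t => coprod.inr ≫ t) l.fac_left
        simp only [coprod.inr_desc_assoc, coprod.inr_desc, Category.id_comp] at this
        exact this.symm
      exact h₁.trans h₂.symm
    · intro g
      have sq : CommSq (initial.to X) (initial.to V) v g := by
        constructor
        apply Subsingleton.elim
      obtain ⟨⟨l⟩⟩ := (h0 V hV).sq_hasLift sq
      exact ⟨l.l, l.fac_right⟩
  · intro h
    exact ⟨fun V _ => inferInstance, fun V _ => inferInstance⟩
end

section
/- In the category Cat of small categories, let J = {u : ∅ → 1, v : 2 → 𝟚, w : 𝟚' → 𝟚}, where 2 is the discrete category on two objects, 𝟚 is the category with objects 0, 1 and a single non-identity morphism 0 → 1, 𝟚' is the category with objects 0, 1 and exactly two non-identity morphisms 0 → 1, v is the identity on objects, and w is the identity on objects collapsing the two parallel morphisms. Then a functor belongs to J^□ if and only if it is a surjective equivalence (an equivalence of categories that is surjective on objects); hence J cofibrantly generates the weak factorization system (injective-on-objects functors, surjective equivalences) on Cat. -/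
/-!
STATEMENT 19: In the category `Cat` of small categories, let
`J = {u : ∅ → 1, v : 2 → 𝟚, w : 𝟚' → 𝟚}`, where `2` is the discrete category
on two objects, `𝟚` is the walking arrow (rendered below as the linear order
`Bool`), `𝟚'` is the category with two objects and exactly two non-identity
parallel morphisms (the walking parallel pair), `v` is the identity on objects
and `w` is the identity on objects collapsing the two parallel morphisms.
Then a functor belongs to `J^□` iff it is a surjective equivalence; hence `J`
cofibrantly generates the weak factorization system
(injective-on-objects functors, surjective equivalences) on `Cat`.
-/

open CategoryTheory Limits

/-- `u : ∅ ⟶ 1` in `Cat`. -/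
noncomputable def catU : Cat.of (Discrete PEmpty) ⟶ Cat.of (Discrete PUnit) :=
  Functor.toCatHom ((Functor.const _).obj ⟨PUnit.unit⟩)

/-- `v : 2 ⟶ 𝟚` in `Cat`, the identity on objects. -/
noncomputable def catV : Cat.of (Discrete Bool) ⟶ Cat.of Bool :=
  (Discrete.functor (fun b => b) : Discrete Bool ⥤ Bool).toCatHom

/-- `w : 𝟚' ⟶ 𝟚` in `Cat`, the identity on objects collapsing the two
parallel morphisms. -/
noncomputable def catW : Cat.of WalkingParallelPair ⟶ Cat.of Bool :=
  (parallelPair (homOfLE (Bool.false_le true) : (false : Bool) ⟶ true)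
    (homOfLE (Bool.false_le true)) : WalkingParallelPair ⥤ Bool).toCatHom


section Aux19

/-- Functor out of the walking arrow `Bool` determined by a morphism. -/
noncomputable def boolFunctor19 {D : Type*} [Category D] {d d' : D} (φ : d ⟶ d') : Bool ⥤ D where
  obj b := cond b d' d
  map {x y} f :=
    match x, y, f with
    | false, false, _ => 𝟙 d
    | false, true, _ => φ
    | true, true, _ => 𝟙 d'
    | true, false, f => absurd (leOfHom f) (by decide)
  map_id b := by cases b <;> rfl
  map_comp {x y z} f g := by
    cases x <;> cases y <;> cases z <;>
      first
        | exact absurd (leOfHom f) (by decide)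
        | exact absurd (leOfHom g) (by decide)
        | simp

lemma boolFunctor19_map {D : Type*} [Category D] {d d' : D} (φ : d ⟶ d')
    (f : (false : Bool) ⟶ true) : (boolFunctor19 φ).map f = φ := rfl

lemma toPUnit_ext19 {X : Type*} [Category X] (F G : X ⥤ Discrete PUnit) : F = G := by
  refine CategoryTheory.Functor.ext (fun x => ?_) (fun x y f => Subsingleton.elim _ _)
  obtain ⟨⟨⟩⟩ := F.obj x; obtain ⟨⟨⟩⟩ := G.obj x; rfl

/-- The key lifting construction: an injective-on-objects functor has the left lifting
property against a fully faithful functor that is surjective on objects. -/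
lemma lift_of_inj19 {X Y C D : Type*} [Category X] [Category Y] [Category C] [Category D]
    (f : X ⥤ Y) (k : C ⥤ D) (hf : Function.Injective f.obj)
    [k.Full] [k.Faithful] (hs : Function.Surjective k.obj)
    (t : X ⥤ C) (b : Y ⥤ D) (w : t ⋙ k = f ⋙ b) :
    ∃ L : Y ⥤ C, f ⋙ L = t ∧ L ⋙ k = b := by
  classical
  set Lobj : Y → C := fun y =>
    if h : ∃ x, f.obj x = y then t.obj h.choose else (hs (b.obj y)).choose with hLobj
  have hLf : ∀ x : X, Lobj (f.obj x) = t.obj x := by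
    intro x
    have h : ∃ x', f.obj x' = f.obj x := ⟨x, rfl⟩
    rw [hLobj]; dsimp only; rw [dif_pos h]
    exact congrArg t.obj (hf h.choose_spec)
  have hkL : ∀ y : Y, k.obj (Lobj y) = b.obj y := by
    intro y
    by_cases h : ∃ x, f.obj x = y
    · rw [hLobj]; dsimp only; rw [dif_pos h]
      have := Functor.congr_obj w h.choose
      simp only [Functor.comp_obj] at this
      rw [this, h.choose_spec]
    · rw [hLobj]; dsimp only; rw [dif_neg h]
      exact (hs (b.obj y)).choose_spec
  refine ⟨{ obj := Lobj
            map := fun {y y'} φ =>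
              k.preimage (eqToHom (hkL y) ≫ b.map φ ≫ eqToHom (hkL y').symm)
            map_id := fun y => by
              apply k.map_injective
              simp
            map_comp := fun {y₁ y₂ y₃} φ ψ => by
              apply k.map_injective
              simp }, ?_, ?_⟩
  · refine CategoryTheory.Functor.ext (fun x => hLf x) (fun x x' φ => ?_)
    apply k.map_injective
    have hw := Functor.congr_hom w φ
    simp only [Functor.comp_map] at hw ⊢
    rw [Functor.map_preimage]
    simp [hw, eqToHom_map]
  · refine CategoryTheory.Functor.ext (fun y => hkL y) (fun y y' φ => ?_)
    simp [Functor.map_preimage]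

lemma hlp_of_inj19 {X Y C D : Cat.{0,0}} (f : X ⟶ Y) (k : C ⟶ D)
    (hf : Function.Injective f.toFunctor.obj)
    (hk : k.toFunctor.IsEquivalence ∧ Function.Surjective k.toFunctor.obj) :
    HasLiftingProperty f k := by
  haveI := hk.1.full; haveI := hk.1.faithful
  constructor
  intro t b sq
  obtain ⟨L, h1, h2⟩ := lift_of_inj19 f.toFunctor k.toFunctor hf hk.2 t.toFunctor b.toFunctor
    (congrArg Cat.Hom.toFunctor sq.w)
  exact CommSq.HasLift.mk' ⟨L.toCatHom, Cat.Hom.ext h1, Cat.Hom.ext h2⟩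

lemma induced_surjEquiv19 {C D : Type} [Category.{0} D] (F : C → D)
    (hF : Function.Surjective F) :
    (inducedFunctor F).IsEquivalence ∧ Function.Surjective (inducedFunctor F).obj :=
  ⟨{ essSurj := ⟨fun d => ⟨(hF d).choose, ⟨eqToIso (hF d).choose_spec⟩⟩⟩ }, hF⟩

end Aux19

lemma eqToHom_conj_self19 {D : Type*} [Category D] {X Y : D} (f : X ⟶ Y) (p : X = X) (q : Y = Y) :
    f = eqToHom p ≫ f ≫ eqToHom q := by simp

lemma eqToHom_sandwich19 {D : Type*} [Category D] {X Y Y' : D} (f : X ⟶ Y) (p : X = X) (q : Y = Y')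
    (r : Y' = Y) : eqToHom p ≫ (f ≫ eqToHom q) ≫ eqToHom r = f := by
  cases q; simp

lemma conj_cancel19 {C : Type*} [Category C] {a b a' b' : C} (p : a' = a) (q : b = b')
    {f g : a ⟶ b} (h : eqToHom p ≫ f ≫ eqToHom q = eqToHom p ≫ g ≫ eqToHom q) : f = g := by
  simpa using congrArg (fun z => eqToHom p.symm ≫ z ≫ eqToHom q.symm) h


section Gen19


lemma injU19 : Function.Injective catU.toFunctor.obj :=
  fun a => a.as.elim

lemma injV19 : Function.Injective catV.toFunctor.obj := by
  rintro ⟨a⟩ ⟨b⟩ h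
  exact Discrete.ext h

lemma injW19 : Function.Injective catW.toFunctor.obj := by
  rintro x y h
  cases x <;> cases y <;> first | rfl | simp [catW] at h

lemma surj_of_rlpU19 {C D : Cat.{0,0}} (k : C ⟶ D) (h : HasLiftingProperty catU k) :
    Function.Surjective k.toFunctor.obj := by
  haveI := h
  intro d
  have sq : CommSq (X := C) (Z := D) ((Functor.empty C : Discrete PEmpty ⥤ C).toCatHom :
      Cat.of (Discrete PEmpty) ⟶ C) catU k ((Functor.const _).obj d).toCatHom :=
    ⟨Cat.Hom.ext (Functor.empty_ext' _ _)⟩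
  haveI : sq.HasLift := h.sq_hasLift sq
  have hc := Functor.congr_obj (congrArg Cat.Hom.toFunctor sq.fac_right) (⟨PUnit.unit⟩ : Discrete PUnit)
  exact ⟨sq.lift.toFunctor.obj ⟨PUnit.unit⟩, hc⟩

lemma full_of_rlpV19 {C D : Cat.{0,0}} (k : C ⟶ D) (h : HasLiftingProperty catV k)
    {c c' : C} (φ : k.toFunctor.obj c ⟶ k.toFunctor.obj c') : ∃ ψ : c ⟶ c', k.toFunctor.map ψ = φ := by
  haveI := h
  have w : (Discrete.functor (fun x => cond x c' c) : Discrete Bool ⥤ C) ⋙ k.toFunctor =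
      (Discrete.functor (fun b => b) : Discrete Bool ⥤ Bool) ⋙ (boolFunctor19 φ : Bool ⥤ D) := by
    refine CategoryTheory.Functor.ext ?_ ?_
    · rintro ⟨x⟩; cases x <;> rfl
    · rintro ⟨x⟩ ⟨y⟩ f
      have hxy : x = y := f.down.down
      subst hxy
      rw [Discrete.functor_map_id ((Discrete.functor (fun x => cond x c' c) :
            Discrete Bool ⥤ C) ⋙ k.toFunctor) f,
        Discrete.functor_map_id ((Discrete.functor (fun b => b) : Discrete Bool ⥤ Bool) ⋙ boolFunctor19 φ) f]
      simp
  have sq : CommSq (X := C) (Z := D) ((Discrete.functor (fun x => cond x c' c) : Discrete Bool ⥤ C).toCatHom :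
      Cat.of (Discrete Bool) ⟶ C) catV k (boolFunctor19 φ).toCatHom := by
    constructor
    exact Cat.Hom.ext w
  haveI : sq.HasLift := h.sq_hasLift sq
  have hc : sq.lift.toFunctor.obj false = c :=
    Functor.congr_obj (congrArg Cat.Hom.toFunctor sq.fac_left) ⟨false⟩
  have hc' : sq.lift.toFunctor.obj true = c' :=
    Functor.congr_obj (congrArg Cat.Hom.toFunctor sq.fac_left) ⟨true⟩
  set ar : (false : Bool) ⟶ true := homOfLE (Bool.false_le true) with har
  refine ⟨eqToHom hc.symm ≫ sq.lift.toFunctor.map ar ≫ eqToHom hc', ?_⟩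
  have hm := Functor.congr_hom (congrArg Cat.Hom.toFunctor sq.fac_right) ar
  simp only [Cat.comp_eq_comp] at hm
  erw [Functor.comp_map, Functor.comp_map] at hm
  simp [eqToHom_map, hm, boolFunctor19_map]
  apply eqToHom_sandwich19

lemma faithful_of_rlpW19 {C D : Cat.{0,0}} (k : C ⟶ D) (h : HasLiftingProperty catW k)
    {c c' : C} (ψ ψ' : c ⟶ c') (heq : k.toFunctor.map ψ = k.toFunctor.map ψ') : ψ = ψ' := by
  haveI := h
  have w : (parallelPair ψ ψ' : WalkingParallelPair ⥤ C) ⋙ k.toFunctor =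
      (parallelPair (homOfLE (Bool.false_le true) : (false : Bool) ⟶ true)
        (homOfLE (Bool.false_le true)) : WalkingParallelPair ⥤ Bool) ⋙
        (boolFunctor19 (k.toFunctor.map ψ) : Bool ⥤ D) := by
    refine CategoryTheory.Functor.ext ?_ ?_
    · rintro x; cases x <;> rfl
    · rintro _ _ (_ | _ | _) <;> simp [catW, boolFunctor19_map, heq] <;> apply eqToHom_conj_self19
  have sq : CommSq (X := C) (Z := D) ((parallelPair ψ ψ' : WalkingParallelPair ⥤ C).toCatHom :
      Cat.of WalkingParallelPair ⟶ C) catW k (boolFunctor19 (k.toFunctor.map ψ)).toCatHom := by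
    constructor
    exact Cat.Hom.ext w
  haveI : sq.HasLift := h.sq_hasLift sq
  have e1 := Functor.congr_hom (congrArg Cat.Hom.toFunctor sq.fac_left) WalkingParallelPairHom.left
  have e2 := Functor.congr_hom (congrArg Cat.Hom.toFunctor sq.fac_left) WalkingParallelPairHom.right
  simp only [Cat.comp_eq_comp] at e1 e2
  erw [Functor.comp_map, Functor.comp_map] at e1 e2
  have hcc : (catW.toFunctor ⋙ sq.lift.toFunctor).map WalkingParallelPairHom.left =
      (catW.toFunctor ⋙ sq.lift.toFunctor).map WalkingParallelPairHom.right := rfl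
  erw [Functor.comp_map, Functor.comp_map] at hcc
  exact conj_cancel19 _ _ (e1.symm.trans (hcc.trans e2))

end Gen19

/-- The generating set `J = {u, v, w}` as a class of morphisms of `Cat`. -/
def catJ : MorphismProperty Cat.{0,0} :=
  fun _ _ f => Arrow.mk f = Arrow.mk catU ∨ Arrow.mk f = Arrow.mk catV ∨
    Arrow.mk f = Arrow.mk catW

/-- The class of injective-on-objects functors. -/
def injOnObjects : MorphismProperty Cat.{0,0} :=
  fun _ _ f => Function.Injective f.toFunctor.obj

/-- The class of surjective equivalences. -/
def surjectiveEquivalences : MorphismProperty Cat.{0,0} :=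
  fun _ _ f => f.toFunctor.IsEquivalence ∧ Function.Surjective f.toFunctor.obj

lemma inj_of_llp19 {X Y : Cat.{0,0}} (f : X ⟶ Y) (h : llpOf surjectiveEquivalences f) :
    Function.Injective f.toFunctor.obj := by
  classical
  intro x x' hxx
  by_contra hne
  let E : Cat.{0,0} := Cat.of (InducedCategory (Discrete PUnit.{1}) (fun _ : Bool => ⟨PUnit.unit⟩))
  let g : E ⟶ Cat.of (Discrete PUnit.{1}) :=
    (inducedFunctor _ : InducedCategory (Discrete PUnit.{1}) (fun _ : Bool => ⟨PUnit.unit⟩) ⥤ _).toCatHom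
  haveI := h g (induced_surjEquiv19 _ (fun d => ⟨false, by rcases d with ⟨⟨⟩⟩; rfl⟩))
  let u : (X : Type) ⥤ InducedCategory (Discrete PUnit.{1}) (fun _ : Bool => ⟨PUnit.unit⟩) :=
    { obj := fun z => if z = x then true else false
      map := fun _ => InducedCategory.homMk (𝟙 (⟨PUnit.unit⟩ : Discrete PUnit.{1}))
      map_id := fun _ => rfl
      map_comp := fun _ _ => InducedCategory.hom_ext
        (Subsingleton.elim (α := ((⟨PUnit.unit⟩ : Discrete PUnit.{1}) ⟶ ⟨PUnit.unit⟩)) _ _) }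
  have sq : CommSq (W := X) (X := E) (Y := Y) (u.toCatHom : X ⟶ E) f g ((Functor.const Y).obj ⟨PUnit.unit⟩).toCatHom :=
    ⟨Cat.Hom.ext (toPUnit_ext19 _ _)⟩
  haveI : sq.HasLift := ‹HasLiftingProperty f g›.sq_hasLift sq
  have h1 := Functor.congr_obj (congrArg Cat.Hom.toFunctor sq.fac_left) x
  have h2 := Functor.congr_obj (congrArg Cat.Hom.toFunctor sq.fac_left) x'
  simp only [Cat.comp_eq_comp, Functor.comp_obj, Functor.toCatHom_toFunctor, u] at h1 h2
  have hx1 : sq.lift.toFunctor.obj (f.toFunctor.obj x) = true := by simpa using h1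
  rw [hxx] at hx1
  rw [if_neg (fun hh => hne hh.symm)] at h2
  exact Bool.noConfusion (hx1.symm.trans h2)

lemma factorization19 {C D : Cat.{0,0}} (k : C ⟶ D) :
    ∃ (E : Cat.{0,0}) (g : C ⟶ E) (h : E ⟶ D),
      injOnObjects g ∧ surjectiveEquivalences h ∧ g ≫ h = k := by
  refine ⟨Cat.of (InducedCategory (D : Type) (Sum.elim k.toFunctor.obj id : (C : Type) ⊕ (D : Type) → (D : Type))),
    ({ obj := Sum.inl
       map := fun φ => InducedCategory.homMk (k.toFunctor.map φ)
       map_id := fun c => InducedCategory.hom_ext (by exact k.toFunctor.map_id c)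
       map_comp := fun φ ψ => InducedCategory.hom_ext (by exact k.toFunctor.map_comp φ ψ) } :
       (C : Type) ⥤ InducedCategory (D : Type) _).toCatHom,
    (inducedFunctor _ : InducedCategory (D : Type) _ ⥤ (D : Type)).toCatHom, ?_, ?_, ?_⟩
  · intro a b hab
    exact Sum.inl.inj hab
  · exact induced_surjEquiv19 _ (fun d => ⟨Sum.inr d, rfl⟩)
  · rfl

lemma main_iff19 {C D : Cat.{0,0}} (k : C ⟶ D) :
    rlpOf catJ k ↔ (k.toFunctor.IsEquivalence ∧ Function.Surjective k.toFunctor.obj) := by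
  constructor
  · intro h
    have hs := surj_of_rlpU19 k (h catU (Or.inl rfl))
    refine ⟨{ faithful := ⟨fun {c c'} {ψ ψ'} hh =>
                faithful_of_rlpW19 k (h catW (Or.inr (Or.inr rfl))) ψ ψ' hh⟩
              full := ⟨fun {c c'} φ => full_of_rlpV19 k (h catV (Or.inr (Or.inl rfl))) φ⟩
              essSurj := ⟨fun d => ⟨(hs d).choose, ⟨eqToIso (hs d).choose_spec⟩⟩⟩ }, hs⟩
  · intro hk X Y f hf
    rcases hf with hh | hh | hh
    · haveI := hlp_of_inj19 catU k injU19 hk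
      exact HasLiftingProperty.of_arrow_iso_left (eqToIso hh.symm) k
    · haveI := hlp_of_inj19 catV k injV19 hk
      exact HasLiftingProperty.of_arrow_iso_left (eqToIso hh.symm) k
    · haveI := hlp_of_inj19 catW k injW19 hk
      exact HasLiftingProperty.of_arrow_iso_left (eqToIso hh.symm) k

theorem cat_rlp_iff_surjective_equivalence :
    (∀ {C D : Cat.{0,0}} (k : C ⟶ D),
      rlpOf catJ k ↔ (k.toFunctor.IsEquivalence ∧ Function.Surjective k.toFunctor.obj)) ∧
    -- hence `J` cofibrantly generates the weak factorization system
    -- (injective on objects, surjective equivalences) on `Cat`: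
    rlpOf catJ = surjectiveEquivalences ∧
    rlpOf injOnObjects = surjectiveEquivalences ∧
    llpOf surjectiveEquivalences = injOnObjects ∧
    (∀ {C D : Cat.{0,0}} (k : C ⟶ D),
      ∃ (E : Cat.{0,0}) (g : C ⟶ E) (h : E ⟶ D),
        injOnObjects g ∧ surjectiveEquivalences h ∧ g ≫ h = k) := by
  refine ⟨fun k => main_iff19 k, ?_, ?_, ?_, fun k => factorization19 k⟩
  · funext C D k
    exact propext (main_iff19 k)
  · funext C D k
    refine propext ⟨fun h => ?_, fun h X Y f hf => hlp_of_inj19 f k hf h⟩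
    refine (main_iff19 k).mp ?_
    intro X Y f hf
    rcases hf with hh | hh | hh
    · haveI := h catU injU19
      exact HasLiftingProperty.of_arrow_iso_left (eqToIso hh.symm) k
    · haveI := h catV injV19
      exact HasLiftingProperty.of_arrow_iso_left (eqToIso hh.symm) k
    · haveI := h catW injW19
      exact HasLiftingProperty.of_arrow_iso_left (eqToIso hh.symm) k
  · funext X Y f
    exact propext ⟨fun h => inj_of_llp19 f h, fun hf C D g hg => hlp_of_inj19 f g hf hg⟩
end
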